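/- arXiv:2510.18503 — 5 statements merged into one kernel-verified Lean document; each statement's English description precedes it below -/
import Mathlib

section
/- Let X be a binomial random variable with parameters m ∈ ℕ and p ∈ (0,1), so P(X = k) = C(m,k) p^k (1−p)^{m−k} for 0 ≤ k ≤ m. For any function f : ℕ → ℝ with f(0) = 0, we have E[(m − X) f(X+1)/(X+1) − ((1−p)/p) f(X)] = 0. -/
/-!
The binomial weights `b k = C(m,k) p^k (1-p)^(m-k)` satisfy the balance relation
`(m - k) p b k = (k + 1) (1 - p) b (k + 1)`. It turns the first term of the Stein operator at `k`
into the second term at `k + 1`, so the expectation telescopes to its boundary terms, which vanish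
because `f 0 = 0` and `b (m + 1) = 0`.
-/

open Finset

noncomputable def binomialMass (m : ℕ) (p : ℝ) (k : ℕ) : ℝ :=
  m.choose k * p ^ k * (1 - p) ^ (m - k)

lemma binomialMass_eq_zero_of_lt {m k : ℕ} (p : ℝ) (h : m < k) : binomialMass m p k = 0 := by
  simp [binomialMass, Nat.choose_eq_zero_of_lt h]

lemma cast_sub_mul_choose (m k : ℕ) :
    ((m : ℝ) - k) * m.choose k = (k + 1) * m.choose (k + 1) := by
  rcases le_or_gt k m with hkm | hmk
  · have h : (m.choose (k + 1) * (k + 1) : ℝ) = m.choose k * ((m - k : ℕ) : ℝ) := by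
      exact_mod_cast Nat.choose_succ_right_eq m k
    rw [Nat.cast_sub hkm] at h
    linarith
  · simp [Nat.choose_eq_zero_of_lt hmk, Nat.choose_eq_zero_of_lt (hmk.trans k.lt_succ_self)]

lemma cast_sub_mul_mul_binomialMass (m k : ℕ) (p : ℝ) :
    ((m : ℝ) - k) * p * binomialMass m p k = (k + 1) * (1 - p) * binomialMass m p (k + 1) := by
  rcases lt_or_ge k m with hkm | hmk
  · have hexp : m - k = m - (k + 1) + 1 := by omega
    simp only [binomialMass, hexp, pow_succ]
    linear_combination p ^ k * (1 - p) ^ (m - (k + 1)) * (1 - p) * p * cast_sub_mul_choose m k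
  · simp only [binomialMass_eq_zero_of_lt p (Nat.lt_succ_of_le hmk), mul_zero]
    rcases hmk.eq_or_lt with rfl | hmk
    · simp
    · simp [binomialMass_eq_zero_of_lt p hmk]

/-- Stein identity for the binomial distribution `B(m,p)`:
`E[(m − X) f(X+1)/(X+1) − ((1−p)/p) f(X)] = 0` for any `f` with `f 0 = 0`. -/
theorem binomial_stein_identity
    (m : ℕ) (p : ℝ) (hp : p ∈ Set.Ioo (0 : ℝ) 1) (f : ℕ → ℝ) (hf0 : f 0 = 0) :
    ∑ k ∈ Finset.range (m + 1),
      (((m : ℝ) - k) * f (k + 1) / ((k : ℝ) + 1) - (1 - p) / p * f k) *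
        ((m.choose k : ℝ) * p ^ k * (1 - p) ^ (m - k)) = 0 := by
  have hp0 : p ≠ 0 := hp.1.ne'
  set g : ℕ → ℝ := fun k => (1 - p) / p * f k * binomialMass m p k
  have first_term_shift (k : ℕ) :
      ((m : ℝ) - k) * f (k + 1) / ((k : ℝ) + 1) * binomialMass m p k = g (k + 1) := by
    have hk : (k : ℝ) + 1 ≠ 0 := by positivity
    simp only [g]
    field_simp
    linear_combination f (k + 1) * cast_sub_mul_mul_binomialMass m k p
  calc _ = ∑ k ∈ range (m + 1), (g (k + 1) - g k) := by
        refine sum_congr rfl fun k _ => ?_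
        rw [sub_mul, ← binomialMass, first_term_shift]
    _ = g (m + 1) - g 0 := sum_range_sub g (m + 1)
    _ = 0 := by simp [g, hf0, binomialMass_eq_zero_of_lt p (Nat.lt_succ_self m)]
end

section
/- Let X follow the Beta negative binomial distribution BNB(α, β, r) with α, β, r > 0, i.e. P(X = k) = (B(r+k, α+β)/B(r, α)) · Γ(k+β)/(k! Γ(β)) for k ∈ ℕ. For any function f : ℕ → ℝ with polynomially bounded growth, E[(r+X)(X+β) f(X+1) − (r+X+α+β−1) X f(X)] = 0, provided α is large enough that the relevant moments exist (e.g. α > 2 and f bounded). -/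
/-- The real Beta function `B(x,y) = Γ(x)Γ(y)/Γ(x+y)`. -/
noncomputable def betaFn (x y : ℝ) : ℝ := Real.Gamma x * Real.Gamma y / Real.Gamma (x + y)

/-- Auxiliary telescoping sequence for the Stein identity. -/
noncomputable def steinG (α β r : ℝ) (f pmf : ℕ → ℝ) (k : ℕ) : ℝ :=
  (r + k + α + β - 1) * k * f k * pmf k

/-- Stein identity for the Beta negative binomial distribution `BNB(α,β,r)`:
`E[(r+X)(X+β) f(X+1) − (r+X+α+β−1) X f(X)] = 0` for bounded `f`, assuming `α > 2`
so that the moments involved exist. -/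
theorem beta_negative_binomial_stein_identity
    (α β r : ℝ) (hα : 2 < α) (hβ : 0 < β) (hr : 0 < r)
    (f : ℕ → ℝ) (hf : ∃ C : ℝ, ∀ k, |f k| ≤ C)
    (pmf : ℕ → ℝ)
    (hpmf : ∀ k : ℕ, pmf k =
      betaFn (r + k) (α + β) / betaFn r α *
        (Real.Gamma ((k : ℝ) + β) / (Nat.factorial k * Real.Gamma β))) :
    ∑' k : ℕ, ((r + k) * ((k : ℝ) + β) * f (k + 1) -
      (r + k + α + β - 1) * (k : ℝ) * f k) * pmf k = 0 := by
  obtain ⟨C, hC⟩ := hf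
  have hC0 : 0 ≤ C := le_trans (abs_nonneg _) (hC 0)
  -- positivity of pmf
  have hpmf_pos : ∀ k : ℕ, 0 < pmf k := by
    intro k
    have hk0 : (0:ℝ) ≤ k := Nat.cast_nonneg k
    rw [hpmf k]
    unfold betaFn
    have p1 := Real.Gamma_pos_of_pos (show (0:ℝ) < r + k by linarith)
    have p2 := Real.Gamma_pos_of_pos (show (0:ℝ) < r + (k:ℝ) + (α + β) by linarith)
    have p3 := Real.Gamma_pos_of_pos (show (0:ℝ) < α + β by linarith)
    have p4 := Real.Gamma_pos_of_pos hr
    have p5 := Real.Gamma_pos_of_pos (show (0:ℝ) < α by linarith)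
    have p6 := Real.Gamma_pos_of_pos (show (0:ℝ) < r + α by linarith)
    have p7 := Real.Gamma_pos_of_pos (show (0:ℝ) < (k:ℝ) + β by linarith)
    have p8 := Real.Gamma_pos_of_pos hβ
    have p9 : (0:ℝ) < (Nat.factorial k : ℝ) := by positivity
    positivity
  -- the key recurrence
  have hrec : ∀ k : ℕ, (r + k) * ((k : ℝ) + β) * pmf k
      = (r + k + α + β) * ((k : ℝ) + 1) * pmf (k + 1) := by
    intro k
    have hk0 : (0:ℝ) ≤ k := Nat.cast_nonneg k
    have h1 : (0:ℝ) < r + k := by linarith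
    have h2 : (0:ℝ) < r + k + (α + β) := by linarith
    have h3 : (0:ℝ) < (k:ℝ) + β := by linarith
    rw [hpmf k, hpmf (k+1)]
    unfold betaFn
    rw [Nat.factorial_succ]
    push_cast
    rw [show r + ((k:ℝ)+1) = (r+(k:ℝ))+1 by ring,
        Real.Gamma_add_one h1.ne',
        show r + (k:ℝ) + 1 + (α + β) = (r+(k:ℝ)+(α+β))+1 by ring,
        Real.Gamma_add_one h2.ne',
        show (k:ℝ) + 1 + β = ((k:ℝ)+β)+1 by ring,
        Real.Gamma_add_one h3.ne']
    have g1 : Real.Gamma (r + (k:ℝ)) ≠ 0 := (Real.Gamma_pos_of_pos h1).ne'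
    have g2 : Real.Gamma (r + (k:ℝ) + (α+β)) ≠ 0 := (Real.Gamma_pos_of_pos h2).ne'
    have g3 : Real.Gamma ((k:ℝ) + β) ≠ 0 := (Real.Gamma_pos_of_pos h3).ne'
    have g4 : Real.Gamma (α+β) ≠ 0 := (Real.Gamma_pos_of_pos (by linarith)).ne'
    have g5 : Real.Gamma r ≠ 0 := (Real.Gamma_pos_of_pos hr).ne'
    have g6 : Real.Gamma α ≠ 0 := (Real.Gamma_pos_of_pos (by linarith)).ne'
    have g7 : Real.Gamma (r+α) ≠ 0 := (Real.Gamma_pos_of_pos (by linarith)).ne'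
    have g8 : Real.Gamma β ≠ 0 := (Real.Gamma_pos_of_pos hβ).ne'
    have g9 : ((Nat.factorial k : ℝ)) ≠ 0 := by positivity
    have g10 : ((k:ℝ)+1) ≠ 0 := by positivity
    field_simp
    ring
  -- the summand telescopes
  have hG : ∀ k : ℕ, ((r + k) * ((k : ℝ) + β) * f (k + 1) -
      (r + k + α + β - 1) * (k : ℝ) * f k) * pmf k
      = steinG α β r f pmf (k+1) - steinG α β r f pmf k := by
    intro k
    simp only [steinG]
    push_cast
    linear_combination f (k+1) * hrec k
  -- the nonnegative sequence h
  set h : ℕ → ℝ := fun k => (r + k + α + β - 1) * k * pmf k with hh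
  have hnn : ∀ k, 0 ≤ h k := by
    intro k
    have hk0 : (0:ℝ) ≤ k := Nat.cast_nonneg k
    have : (0:ℝ) < r + k + α + β - 1 := by linarith
    exact mul_nonneg (mul_nonneg this.le hk0) (hpmf_pos k).le
  have hsucc : ∀ k : ℕ, h (k+1) = (r + k) * ((k:ℝ) + β) * pmf k := by
    intro k
    simp only [hh]
    push_cast
    rw [hrec k]
    ring
  -- eventual decrease of n * h n
  obtain ⟨N₀, hN₀⟩ := exists_nat_ge ((r*β + r + β + r*β) / (α - 2))
  set N : ℕ := max N₀ 1 with hN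
  have hNge : (r*β + r + β + r*β) ≤ (α - 2) * N := by
    have hα2 : (0:ℝ) < α - 2 := by linarith
    have : (N₀ : ℝ) ≤ N := by exact_mod_cast Nat.le_max_left N₀ 1
    have h2 : (r*β + r + β + r*β) / (α - 2) ≤ (N : ℝ) := le_trans hN₀ this
    calc (r*β + r + β + r*β) = ((r*β + r + β + r*β) / (α-2)) * (α-2) := by
          field_simp
      _ ≤ (N:ℝ) * (α-2) := by nlinarith
      _ = (α-2) * N := by ring
  have hdec : ∀ n : ℕ, N ≤ n → ((n:ℝ)+1) * h (n+1) ≤ (n:ℝ) * h n := by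
    intro n hn
    have hn1 : (1:ℝ) ≤ n := by
      have : (1:ℕ) ≤ n := le_trans (Nat.le_max_right N₀ 1) hn
      exact_mod_cast this
    have hNn : (N:ℝ) ≤ n := by exact_mod_cast hn
    have hα2 : (0:ℝ) < α - 2 := by linarith
    have key : (α - 2) * n ≥ r*β + r + β + r*β := by
      calc r*β + r + β + r*β ≤ (α-2) * N := hNge
        _ ≤ (α-2) * n := by nlinarith
    rw [hsucc n]
    simp only [hh]
    have hp := (hpmf_pos n).le
    have hpoly : ((n:ℝ)+1) * ((r + n) * ((n:ℝ) + β)) ≤ (n:ℝ) * ((r + n + α + β - 1) * n) := by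
      nlinarith [sq_nonneg ((n:ℝ) - 1), mul_pos hr hβ]
    calc ((n:ℝ)+1) * ((r + n) * ((n:ℝ) + β) * pmf n)
        = (((n:ℝ)+1) * ((r + n) * ((n:ℝ) + β))) * pmf n := by ring
      _ ≤ ((n:ℝ) * ((r + n + α + β - 1) * n)) * pmf n := by
          exact mul_le_mul_of_nonneg_right hpoly hp
      _ = (n:ℝ) * ((r + (n:ℝ) + α + β - 1) * n * pmf n) := by ring
  -- hence n * h n is bounded by M := N * h N for n ≥ N
  have hbound : ∀ n : ℕ, N ≤ n → (n:ℝ) * h n ≤ (N:ℝ) * h N := by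
    intro n hn
    induction n, hn using Nat.le_induction with
    | base => exact le_refl _
    | succ m hm ih =>
        have := hdec m hm
        push_cast
        linarith
  -- steinG tends to 0
  have hGto : Filter.Tendsto (fun n : ℕ => steinG α β r f pmf n) Filter.atTop (nhds 0) := by
    refine squeeze_zero_norm' (a := fun n : ℕ => C * ((N:ℝ) * h N) / n) ?_ ?_
    · filter_upwards [Filter.eventually_ge_atTop N] with n hn
      have hn1 : (1:ℕ) ≤ n := le_trans (Nat.le_max_right N₀ 1) hn
      have hnpos : (0:ℝ) < n := by exact_mod_cast hn1
      have hGabs : |steinG α β r f pmf n| ≤ C * h n := by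
        have : steinG α β r f pmf n = f n * h n := by
          simp only [steinG, hh]; ring
        rw [this, abs_mul, abs_of_nonneg (hnn n)]
        exact mul_le_mul_of_nonneg_right (hC n) (hnn n)
      have hhn : h n ≤ ((N:ℝ) * h N) / n := by
        rw [le_div_iff₀ hnpos]
        calc h n * n = (n:ℝ) * h n := by ring
          _ ≤ (N:ℝ) * h N := hbound n hn
      calc ‖steinG α β r f pmf n‖ = |steinG α β r f pmf n| := rfl
        _ ≤ C * h n := hGabs
        _ ≤ C * (((N:ℝ) * h N) / n) := by
            exact mul_le_mul_of_nonneg_left hhn hC0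
        _ = C * ((N:ℝ) * h N) / n := by ring
    · exact tendsto_const_div_atTop_nhds_zero_nat _
  by_cases hs : Summable (fun k : ℕ => ((r + k) * ((k : ℝ) + β) * f (k + 1) -
      (r + k + α + β - 1) * (k : ℝ) * f k) * pmf k)
  · have h1 := hs.hasSum.tendsto_sum_nat
    have h2 : ∀ n : ℕ, (∑ i ∈ Finset.range n, ((r + i) * ((i : ℝ) + β) * f (i + 1) -
        (r + i + α + β - 1) * (i : ℝ) * f i) * pmf i) = steinG α β r f pmf n := by
      intro n
      rw [Finset.sum_congr rfl (fun i _ => hG i), Finset.sum_range_sub]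
      simp [steinG]
    rw [show (fun n : ℕ => ∑ i ∈ Finset.range n, ((r + i) * ((i : ℝ) + β) * f (i + 1) -
        (r + i + α + β - 1) * (i : ℝ) * f i) * pmf i)
        = fun n : ℕ => steinG α β r f pmf n from funext h2] at h1
    exact tendsto_nhds_unique h1 hGto
  · exact tsum_eq_zero_of_not_summable hs
end

section
/- Let U = {a₁,…,b₁} × ⋯ × {a_d,…,b_d} ⊂ ℤ^d with all a_i, b_i finite, let p : ℤ^d → ℝ be a pmf supported on U, let τ = (τ⁽¹⁾,…,τ⁽ᵈ⁾) with each τ⁽ⁱ⁾ : U → ℝ, and let f : ℤ^d → ℝ vanish at every point k ∈ U with k_i = a_i or k_i = b_i for some i. Then for each coordinate i ∈ {1,…,d}: ∑_{k∈U} (f(k + e_i) τ⁽ⁱ⁾(k + e_i) p(k + e_i) − f(k) τ⁽ⁱ⁾(k) p(k)) = 0, where e_i is the i-th standard basis vector (with the convention that f, τ⁽ⁱ⁾, p are 0 outside U as appropriate). Equivalently, E[[𝒜f(X)]_i] = 0 for X distributed according to p. -/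
/-! The shift `k ↦ k + eᵢ` is a bijection of `ℤ^d`, so both sums in the identity are sums of
`g = f τ⁽ⁱ⁾ p` over the box and over its translate.  They can only differ on the top face of
the translate, where `p` vanishes, and on the bottom face `kᵢ = aᵢ` of the box, where `f` does. -/

open Finset Function

namespace Fintype

variable {ι α : Type*} [Fintype ι] [DecidableEq ι]

theorem update_mem_piFinset_iff {s : ι → Finset α} {k : ι → α} (hk : k ∈ piFinset s) (i : ι)
    (x : α) : update k i x ∈ piFinset s ↔ x ∈ s i := by
  refine ⟨fun h => by simpa using mem_piFinset.mp h i, fun hx => mem_piFinset.mpr fun j => ?_⟩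
  rcases eq_or_ne j i with rfl | hj
  · simpa using hx
  · simpa [hj] using mem_piFinset.mp hk j

end Fintype

open Fintype

variable {ι M : Type*} [Fintype ι] [DecidableEq ι] [AddCommMonoid M]

theorem sum_piFinset_Icc_update_add_one {a b : ι → ℤ} (i : ι) {g : (ι → ℤ) → M}
    (h_supp : ∀ k ∉ piFinset fun j => Icc (a j) (b j), g k = 0)
    (h_bot : ∀ k ∈ piFinset (fun j => Icc (a j) (b j)), k i = a i → g k = 0) :
    ∑ k ∈ piFinset (fun j => Icc (a j) (b j)), g (update k i (k i + 1)) =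
      ∑ k ∈ piFinset (fun j => Icc (a j) (b j)), g k := by
  refine sum_bij_ne_zero (fun k _ _ => update k i (k i + 1)) ?_ ?_ ?_ (fun _ _ _ => rfl)
  · exact fun k _ hg => by_contra fun h => hg (h_supp _ h)
  · intro k _ _ l _ _ h
    funext j
    rcases eq_or_ne j i with rfl | hj
    · simpa using congrFun h j
    · simpa [hj] using congrFun h j
  · intro l hl hg
    obtain ⟨hal, hlb⟩ := mem_Icc.mp (mem_piFinset.mp hl i)
    have hli : l i ≠ a i := fun h => hg (h_bot l hl h)
    have hmem : update l i (l i - 1) ∈ piFinset fun j => Icc (a j) (b j) :=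
      (update_mem_piFinset_iff hl i _).mpr (mem_Icc.mpr ⟨by omega, by omega⟩)
    exact ⟨update l i (l i - 1), hmem, by simpa using hg, by simp⟩

theorem multivariate_discrete_stein_identity_general
    (d : ℕ) (a b : Fin d → ℤ)
    (p : (Fin d → ℤ) → ℝ) (τ : Fin d → (Fin d → ℤ) → ℝ) (f : (Fin d → ℤ) → ℝ)
    (hsupp : ∀ k, k ∉ (Fintype.piFinset fun i => Finset.Icc (a i) (b i)) → p k = 0)
    (hbd : ∀ k ∈ Fintype.piFinset fun i => Finset.Icc (a i) (b i),
      (∃ i, k i = a i ∨ k i = b i) → f k = 0) :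
    ∀ i : Fin d,
      ∑ k ∈ Fintype.piFinset (fun j => Finset.Icc (a j) (b j)),
        (f (Function.update k i (k i + 1)) * τ i (Function.update k i (k i + 1)) *
            p (Function.update k i (k i + 1)) -
          f k * τ i k * p k) = 0 := by
  intro i
  rw [sum_sub_distrib, sub_eq_zero]
  exact sum_piFinset_Icc_update_add_one (g := fun k => f k * τ i k * p k) i
    (fun k hk => by simp [hsupp k hk]) (fun k hk hki => by simp [hbd k hk ⟨i, .inl hki⟩])

/-- Multivariate discrete Stein identity on a finite rectangle
`U = {a₁,…,b₁} × ⋯ × {a_d,…,b_d} ⊂ ℤ^d`: for a pmf `p` supported on `U`, vector field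
`τ`, and `f` vanishing on the boundary of `U`, each coordinate of the expected Stein
operator vanishes (telescoping in coordinate `i`). -/
theorem multivariate_discrete_stein_identity
    (d : ℕ) (hd : 0 < d) (a b : Fin d → ℤ) (hab : ∀ i, a i < b i)
    (p : (Fin d → ℤ) → ℝ) (τ : Fin d → (Fin d → ℤ) → ℝ) (f : (Fin d → ℤ) → ℝ)
    (hpos : ∀ k ∈ Fintype.piFinset fun i => Finset.Icc (a i) (b i), 0 < p k)
    (hsupp : ∀ k, k ∉ (Fintype.piFinset fun i => Finset.Icc (a i) (b i)) → p k = 0)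
    (hsum : ∑ k ∈ Fintype.piFinset (fun i => Finset.Icc (a i) (b i)), p k = 1)
    (hbd : ∀ k ∈ Fintype.piFinset fun i => Finset.Icc (a i) (b i),
      (∃ i, k i = a i ∨ k i = b i) → f k = 0) :
    ∀ i : Fin d,
      ∑ k ∈ Fintype.piFinset (fun j => Finset.Icc (a j) (b j)),
        (f (Function.update k i (k i + 1)) * τ i (Function.update k i (k i + 1)) *
            p (Function.update k i (k i + 1)) -
          f k * τ i k * p k) = 0 :=
  multivariate_discrete_stein_identity_general d a b p τ f hsupp hbd
end

section
/- Let X = (X⁽¹⁾,…,X⁽ᵈ⁾) follow the negative multinomial distribution NM(r, p) with r > 0 and p ∈ (0,1)^d, p₀ := 1 − p₁ − ⋯ − p_d > 0, so P(X = k) = Γ(r + ∑ᵢkᵢ) (p₀^r/Γ(r)) ∏ᵢ pᵢ^{kᵢ}/kᵢ! for k ∈ ℕ^d. For each i and any bounded function f : ℕ^d → ℝ, we have E[(∑_{j=1}^d X⁽ʲ⁾ + r) pᵢ f(X + eᵢ) − X⁽ⁱ⁾ f(X)] = 0. -/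
lemma NMaux.gamma_le (r : ℝ) (hr : 0 < r) (n : ℕ) :
    Real.Gamma (r + n) ≤ Real.Gamma r * (n + ⌈r⌉₊).factorial := by
  induction n with
  | zero =>
      simp only [Nat.cast_zero, add_zero, Nat.zero_add]
      have h1 : (1:ℝ) ≤ (⌈r⌉₊).factorial := by exact_mod_cast Nat.one_le_iff_ne_zero.2 (⌈r⌉₊).factorial_ne_zero
      nlinarith [Real.Gamma_pos_of_pos hr]
  | succ n ih =>
      have hrn : (0:ℝ) < r + n := by positivity
      have h1 : Real.Gamma (r + (n+1:ℕ)) = (r + n) * Real.Gamma (r + n) := by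
        push_cast
        rw [show r + ((n:ℝ)+1) = (r + n) + 1 by ring, Real.Gamma_add_one hrn.ne']
      have hle : r + (n:ℝ) ≤ ((n + 1 + ⌈r⌉₊ : ℕ) : ℝ) := by
        have := Nat.le_ceil r
        push_cast
        linarith
      have hfact : ((n + 1 + ⌈r⌉₊).factorial : ℝ) = ((n+1+⌈r⌉₊:ℕ):ℝ) * ((n + ⌈r⌉₊).factorial : ℝ) := by
        have : (n + 1 + ⌈r⌉₊) = (n + ⌈r⌉₊) + 1 := by omega
        rw [this, Nat.factorial_succ]
        push_cast; ring
      have hG := Real.Gamma_pos_of_pos hrn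
      have hGr := Real.Gamma_pos_of_pos hr
      have hfpos : (0:ℝ) < ((n + ⌈r⌉₊).factorial : ℝ) := by exact_mod_cast (n + ⌈r⌉₊).factorial_pos
      rw [h1, hfact]
      nlinarith [mul_le_mul_of_nonneg_left ih hrn.le]

lemma NMaux.fact_add_le (n m : ℕ) : (n+m).factorial ≤ (n+m)^m * n.factorial := by
  induction m with
  | zero => simp
  | succ m ih =>
      have : (n + (m+1)).factorial = (n + m + 1) * (n + m).factorial := by
        rw [show n + (m+1) = (n+m) + 1 by omega, Nat.factorial_succ]
      rw [this]
      calc (n + m + 1) * (n + m).factorial ≤ (n + m + 1) * ((n+m)^m * n.factorial) :=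
            Nat.mul_le_mul_left _ ih
        _ ≤ (n + (m+1))^(m+1) * n.factorial := by
            rw [show n + (m+1) = (n + m) + 1 by omega, pow_succ]
            have h2 : (n+m)^m ≤ (n+m+1)^m := Nat.pow_le_pow_left (by omega) m
            calc (n + m + 1) * ((n+m)^m * n.factorial) ≤ (n + m + 1) * ((n+m+1)^m * n.factorial) := by
                  exact Nat.mul_le_mul_left _ (Nat.mul_le_mul_right _ h2)
              _ = (n+m+1)^m * (n+m+1) * n.factorial := by ring


lemma NMaux.summable_shift (K : ℕ) (q : ℝ) (h0 : 0 < q) (h1 : q < 1) :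
    Summable (fun n : ℕ => ((n:ℝ)+1)^K * q^n) := by
  have hq : ‖q‖ < 1 := by rwa [Real.norm_eq_abs, abs_of_pos h0]
  have h := (summable_pow_mul_geometric_of_norm_lt_one K hq).comp_injective Nat.succ_injective
  have h3 := h.mul_left (1/q)
  refine h3.congr fun n => ?_
  simp only [Function.comp, Nat.succ_eq_add_one, pow_succ]
  push_cast
  field_simp

lemma NMaux.shell (d : ℕ) (p : Fin d → ℝ) (n : ℕ) :
    ∑ k ∈ Finset.piAntidiag Finset.univ n, (∏ i, p i ^ k i / (k i).factorial)
      = (∑ i, p i)^n / n.factorial := by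
  rw [Finset.sum_pow_eq_sum_piAntidiag, Finset.sum_div]
  refine Finset.sum_congr rfl fun k hk => ?_
  obtain ⟨hsum, -⟩ := Finset.mem_piAntidiag.1 hk
  have hm := Nat.multinomial_spec Finset.univ k
  rw [hsum] at hm
  have hmr : (∏ i, ((k i).factorial : ℝ)) * (Nat.multinomial Finset.univ k : ℝ)
      = (n.factorial : ℝ) := by exact_mod_cast hm
  have hne : (∏ i, ((k i).factorial : ℝ)) ≠ 0 := by positivity
  have hnn : ((n.factorial : ℝ)) ≠ 0 := by positivity
  rw [Finset.prod_div_distrib, div_eq_div_iff hne hnn]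
  linear_combination -(∏ i, p i ^ k i) * hmr

lemma NMaux.summable_G (r : ℝ) (hr : 0 < r) (q : ℝ) (hq0 : 0 < q) (hq1 : q < 1) :
    Summable (fun n : ℕ => ((n:ℝ) + r + 1) * Real.Gamma (r + n) * (q^n / n.factorial)) := by
  set m := ⌈r⌉₊ with hm
  set m₂ := m + 2 with hm2
  have hGr := Real.Gamma_pos_of_pos hr
  have hH : Summable (fun n : ℕ => (Real.Gamma r * (((m₂:ℝ)+1)^m₂)) * (((n:ℝ)+1)^m₂ * q^n)) :=
    (NMaux.summable_shift m₂ q hq0 hq1).mul_left _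
  refine Summable.of_nonneg_of_le (fun n => ?_) (fun n => ?_) hH
  · have h1 : (0:ℝ) < r + n := by positivity
    have := Real.Gamma_pos_of_pos h1
    positivity
  · have h1 : (0:ℝ) < r + n := by positivity
    have hGn := Real.Gamma_pos_of_pos h1
    have hfac : (0:ℝ) < (n.factorial : ℝ) := by exact_mod_cast n.factorial_pos
    have hqn : (0:ℝ) ≤ q^n := by positivity
    have f2 : ((n:ℝ) + r + 1) ≤ ((n + m + 1 : ℕ):ℝ) := by
      have := Nat.le_ceil r; push_cast; linarith
    have e1 : ((n:ℝ)+r+1) * Real.Gamma (r+n) ≤ Real.Gamma r * ((n+m₂).factorial : ℝ) := by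
      calc ((n:ℝ)+r+1) * Real.Gamma (r+n)
          ≤ ((n + m + 1 : ℕ):ℝ) * (Real.Gamma r * ((n + m).factorial : ℝ)) := by
            apply mul_le_mul f2 (NMaux.gamma_le r hr n) hGn.le (by positivity)
        _ = Real.Gamma r * (((n+m+1).factorial : ℝ)) := by
            rw [show (n+m+1).factorial = (n+m+1) * (n+m).factorial from Nat.factorial_succ _]
            push_cast; ring
        _ ≤ Real.Gamma r * ((n+m₂).factorial : ℝ) := by
            have : (n+m+1).factorial ≤ (n+m₂).factorial := Nat.factorial_le (by omega)
            have := Nat.cast_le (α := ℝ).2 this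
            nlinarith
    have e2 : ((n+m₂).factorial : ℝ) ≤ ((m₂:ℝ)+1)^m₂ * (((n:ℝ)+1)^m₂ * (n.factorial:ℝ)) := by
      have f5 := NMaux.fact_add_le n m₂
      have f5r : ((n+m₂).factorial : ℝ) ≤ ((n+m₂ : ℕ):ℝ)^m₂ * (n.factorial : ℝ) := by
        exact_mod_cast f5
      have f6 : ((n+m₂ : ℕ):ℝ) ≤ ((m₂:ℝ)+1) * ((n:ℝ)+1) := by push_cast; nlinarith
      calc ((n+m₂).factorial : ℝ) ≤ ((n+m₂ : ℕ):ℝ)^m₂ * (n.factorial : ℝ) := f5r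
        _ ≤ (((m₂:ℝ)+1) * ((n:ℝ)+1))^m₂ * (n.factorial : ℝ) := by
            apply mul_le_mul_of_nonneg_right (pow_le_pow_left₀ (by positivity) f6 m₂) hfac.le
        _ = ((m₂:ℝ)+1)^m₂ * (((n:ℝ)+1)^m₂ * (n.factorial:ℝ)) := by rw [mul_pow]; ring
    calc ((n:ℝ) + r + 1) * Real.Gamma (r + n) * (q^n / n.factorial)
        ≤ (Real.Gamma r * ((n+m₂).factorial : ℝ)) * (q^n / n.factorial) := by
          apply mul_le_mul_of_nonneg_right e1 (by positivity)
      _ ≤ (Real.Gamma r * (((m₂:ℝ)+1)^m₂ * (((n:ℝ)+1)^m₂ * (n.factorial:ℝ)))) * (q^n / n.factorial) := by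
          apply mul_le_mul_of_nonneg_right (mul_le_mul_of_nonneg_left e2 hGr.le) (by positivity)
      _ = (Real.Gamma r * (((m₂:ℝ)+1)^m₂)) * (((n:ℝ)+1)^m₂ * q^n) := by
          field_simp

lemma NMaux.master (d : ℕ) (r : ℝ) (hr : 0 < r) (p : Fin d → ℝ)
    (hp : ∀ i, 0 < p i) (hq0 : 0 < ∑ i, p i) (hq1 : ∑ i, p i < 1) :
    Summable (fun k : Fin d → ℕ =>
      ((∑ j, ((k j : ℝ))) + r + 1) *
        (Real.Gamma (r + ∑ j, ((k j : ℝ))) * ∏ i, p i ^ k i / (k i).factorial)) := by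
  set q := ∑ i, p i with hqdef
  set G : ℕ → ℝ := fun n => ((n:ℝ) + r + 1) * Real.Gamma (r + n) * (q^n / n.factorial) with hG
  have hGsum : Summable G := NMaux.summable_G r hr q hq0 hq1
  have hGnn : ∀ n, 0 ≤ G n := fun n => by
    have h1 : (0:ℝ) < r + n := by positivity
    have := Real.Gamma_pos_of_pos h1
    simp only [hG]; positivity
  have hFnn : ∀ k : Fin d → ℕ, 0 ≤ ((∑ j, ((k j : ℝ))) + r + 1) *
      (Real.Gamma (r + ∑ j, ((k j : ℝ))) * ∏ i, p i ^ k i / (k i).factorial) := by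
    intro k
    have hs : (0:ℝ) ≤ ∑ j, ((k j : ℝ)) := Finset.sum_nonneg fun j _ => Nat.cast_nonneg _
    have h1 : (0:ℝ) < r + ∑ j, ((k j : ℝ)) := by positivity
    have := Real.Gamma_pos_of_pos h1
    have hprod : (0:ℝ) ≤ ∏ i, p i ^ k i / (k i).factorial := by
      apply Finset.prod_nonneg; intro i _
      have := hp i
      positivity
    positivity
  apply summable_of_sum_le (c := ∑' n, G n) hFnn
  intro u
  set N := u.sup (fun k => ∑ j, k j) with hN
  have hmaps : ∀ k ∈ u, (∑ j, k j) ∈ Finset.range (N+1) := by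
    intro k hk
    exact Finset.mem_range.2 (Nat.lt_succ_of_le (Finset.le_sup hk))
  rw [← Finset.sum_fiberwise_of_maps_to hmaps]
  have hfiber : ∀ n ∈ Finset.range (N+1),
      (∑ k ∈ u.filter (fun k => (∑ j, k j) = n),
        ((∑ j, ((k j : ℝ))) + r + 1) *
          (Real.Gamma (r + ∑ j, ((k j : ℝ))) * ∏ i, p i ^ k i / (k i).factorial)) ≤ G n := by
    intro n _
    have h1 : (0:ℝ) < r + n := by positivity
    have hGn := Real.Gamma_pos_of_pos h1
    have step1 : (∑ k ∈ u.filter (fun k => (∑ j, k j) = n),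
        ((∑ j, ((k j : ℝ))) + r + 1) *
          (Real.Gamma (r + ∑ j, ((k j : ℝ))) * ∏ i, p i ^ k i / (k i).factorial))
        = (((n:ℝ) + r + 1) * Real.Gamma (r + n)) *
          ∑ k ∈ u.filter (fun k => (∑ j, k j) = n), ∏ i, p i ^ k i / (k i).factorial := by
      rw [Finset.mul_sum]
      refine Finset.sum_congr rfl fun k hk => ?_
      have hkn : (∑ j, k j) = n := (Finset.mem_filter.1 hk).2
      have hknr : (∑ j, ((k j : ℝ))) = (n:ℝ) := by
        rw [← hkn]; push_cast; ring
      rw [hknr]; ring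
    rw [step1]
    have hsub : u.filter (fun k => (∑ j, k j) = n) ⊆ Finset.piAntidiag Finset.univ n := by
      intro k hk
      refine Finset.mem_piAntidiag.2 ⟨(Finset.mem_filter.1 hk).2, fun i _ => Finset.mem_univ i⟩
    have hle : (∑ k ∈ u.filter (fun k => (∑ j, k j) = n), ∏ i, p i ^ k i / (k i).factorial)
        ≤ q^n / n.factorial := by
      rw [← NMaux.shell d p n]
      apply Finset.sum_le_sum_of_subset_of_nonneg hsub
      intro k _ _
      apply Finset.prod_nonneg; intro i _
      have := hp i; positivity
    calc (((n:ℝ) + r + 1) * Real.Gamma (r + n)) *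
          ∑ k ∈ u.filter (fun k => (∑ j, k j) = n), ∏ i, p i ^ k i / (k i).factorial
        ≤ (((n:ℝ) + r + 1) * Real.Gamma (r + n)) * (q^n / n.factorial) := by
          apply mul_le_mul_of_nonneg_left hle (by positivity)
      _ = G n := rfl
  calc (∑ n ∈ Finset.range (N+1), ∑ k ∈ u.filter (fun k => (∑ j, k j) = n),
        ((∑ j, ((k j : ℝ))) + r + 1) *
          (Real.Gamma (r + ∑ j, ((k j : ℝ))) * ∏ i, p i ^ k i / (k i).factorial))
      ≤ ∑ n ∈ Finset.range (N+1), G n := Finset.sum_le_sum hfiber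
    _ ≤ ∑' n, G n := Summable.sum_le_tsum _ (fun n _ => hGnn n) hGsum


/-- Stein identity for the negative multinomial distribution `NM(r,p)` on `ℕ^d`:
for each coordinate `i` and any bounded `f`,
`E[(∑ⱼ X⁽ʲ⁾ + r) pᵢ f(X + eᵢ) − X⁽ⁱ⁾ f(X)] = 0`. -/
theorem negative_multinomial_stein_identity
    (d : ℕ) (hd : 0 < d) (r : ℝ) (hr : 0 < r) (p : Fin d → ℝ)
    (hp : ∀ i, p i ∈ Set.Ioo (0 : ℝ) 1) (hp0 : 0 < 1 - ∑ i, p i)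
    (f : (Fin d → ℕ) → ℝ) (hf : ∃ C : ℝ, ∀ k, |f k| ≤ C)
    (pmf : (Fin d → ℕ) → ℝ)
    (hpmf : ∀ k : Fin d → ℕ, pmf k =
      Real.Gamma (r + ∑ i, (k i : ℝ)) * (Real.rpow (1 - ∑ i, p i) r / Real.Gamma r) *
        ∏ i, p i ^ (k i) / Nat.factorial (k i)) :
    ∀ i : Fin d,
      ∑' k : Fin d → ℕ,
        (((∑ j, (k j : ℝ)) + r) * p i * f (Function.update k i (k i + 1)) -
          (k i : ℝ) * f k) * pmf k = 0 := by
  intro i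
  obtain ⟨C0, hC0⟩ := hf
  set Cf := max C0 0 with hCfdef
  have hCf : ∀ k, |f k| ≤ Cf := fun k => le_trans (hC0 k) (le_max_left _ _)
  have hCf0 : (0:ℝ) ≤ Cf := le_max_right _ _
  have hne : Nonempty (Fin d) := Fin.pos_iff_nonempty.1 hd
  have hq0 : 0 < ∑ j, p j :=
    Finset.sum_pos (fun j _ => (hp j).1) Finset.univ_nonempty
  have hq1 : (∑ j, p j) < 1 := by linarith
  have hA : 0 < Real.rpow (1 - ∑ j, p j) r / Real.Gamma r :=
    div_pos (Real.rpow_pos_of_pos (by linarith) r) (Real.Gamma_pos_of_pos hr)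
  have hsum_nn : ∀ k : Fin d → ℕ, (0:ℝ) ≤ ∑ j, ((k j : ℝ)) :=
    fun k => Finset.sum_nonneg fun j _ => Nat.cast_nonneg _
  have hpmf_nn : ∀ k, 0 ≤ pmf k := by
    intro k
    rw [hpmf k]
    have h1 : (0:ℝ) < r + ∑ j, ((k j:ℝ)) := by have := hsum_nn k; positivity
    have hΓ := Real.Gamma_pos_of_pos h1
    have hprod : (0:ℝ) ≤ ∏ j, p j ^ k j / (k j).factorial :=
      Finset.prod_nonneg fun j _ => by have := (hp j).1; positivity
    positivity
  -- master summability
  have hW : Summable (fun k : Fin d → ℕ => ((∑ j, ((k j : ℝ))) + r + 1) * pmf k) := by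
    have := (NMaux.master d r hr p (fun j => (hp j).1) hq0 hq1).mul_left
      (Real.rpow (1 - ∑ j, p j) r / Real.Gamma r)
    refine this.congr fun k => ?_
    rw [hpmf k]; ring
  -- the shift map
  set σ : (Fin d → ℕ) → (Fin d → ℕ) := fun k => Function.update k i (k i + 1) with hσdef
  have hσinj : Function.Injective σ := by
    intro a b hab
    funext j
    rcases eq_or_ne j i with rfl | hj
    · have := congrFun hab j
      simp only [hσdef, Function.update_self] at this
      omega
    · have := congrFun hab j
      simpa only [hσdef, Function.update_of_ne hj] using this
  set g : (Fin d → ℕ) → ℝ := fun k => (k i : ℝ) * f k * pmf k with hgdef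
  have hg : Summable g := by
    rw [← summable_abs_iff]
    refine Summable.of_nonneg_of_le (fun k => abs_nonneg _) (fun k => ?_) (hW.mul_left Cf)
    have hki : ((k i : ℝ)) ≤ (∑ j, ((k j:ℝ))) + r + 1 := by
      have h1 : ((k i : ℝ)) ≤ ∑ j, ((k j:ℝ)) :=
        Finset.single_le_sum (f := fun j => ((k j : ℝ))) (fun j _ => Nat.cast_nonneg _)
          (Finset.mem_univ i)
      linarith
    have : |g k| = (k i : ℝ) * |f k| * pmf k := by
      simp only [hgdef, abs_mul, abs_of_nonneg (hpmf_nn k),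
        abs_of_nonneg (Nat.cast_nonneg (k i) : (0:ℝ) ≤ (k i : ℝ))]
    rw [this]
    calc (k i : ℝ) * |f k| * pmf k ≤ (k i : ℝ) * Cf * pmf k :=
          mul_le_mul_of_nonneg_right
            (mul_le_mul_of_nonneg_left (hCf k) (by positivity)) (hpmf_nn k)
      _ ≤ ((∑ j, ((k j:ℝ))) + r + 1) * Cf * pmf k :=
          mul_le_mul_of_nonneg_right (mul_le_mul_of_nonneg_right hki hCf0) (hpmf_nn k)
      _ = Cf * (((∑ j, ((k j:ℝ))) + r + 1) * pmf k) := by ring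
  have hgs : Summable (fun k => g (σ k)) := hg.comp_injective hσinj
  -- pmf relation
  have pmf_rel : ∀ k : Fin d → ℕ,
      ((∑ j, ((k j:ℝ))) + r) * p i * pmf k = ((k i:ℝ) + 1) * pmf (σ k) := by
    intro k
    have hσsum_nat : ∑ j, σ k j = (∑ j, k j) + 1 := by
      simp only [hσdef]
      rw [Finset.sum_update_of_mem (Finset.mem_univ i),
        Finset.sum_eq_sum_sdiff_singleton_add (Finset.mem_univ i) k]
      ring
    have hσsum : ∑ j, ((σ k j : ℝ)) = (∑ j, ((k j:ℝ))) + 1 := by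
      have h1 : ((∑ j, σ k j : ℕ) : ℝ) = ((∑ j, k j : ℕ):ℝ) + 1 := by
        rw [hσsum_nat]; push_cast; ring
      push_cast at h1
      exact h1
    have hupd : (fun j => p j ^ (σ k) j / ((σ k) j).factorial)
        = Function.update (fun j => p j ^ k j / (k j).factorial) i
            (p i ^ (k i + 1) / (k i + 1).factorial) := by
      funext j
      rcases eq_or_ne j i with rfl | hj
      · simp [hσdef]
      · simp [hσdef, Function.update_of_ne hj]
    have hprod : (∏ j, p j ^ (σ k) j / ((σ k) j).factorial)
        = (p i ^ (k i + 1) / (k i + 1).factorial) *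
            ∏ j ∈ Finset.univ \ {i}, p j ^ k j / (k j).factorial := by
      rw [hupd, Finset.prod_update_of_mem (Finset.mem_univ i)]
    have hprod0 : (∏ j, p j ^ k j / (k j).factorial)
        = (p i ^ (k i) / (k i).factorial) *
            ∏ j ∈ Finset.univ \ {i}, p j ^ k j / (k j).factorial := by
      rw [Finset.prod_eq_prod_diff_singleton_mul (Finset.mem_univ i)
        (fun j => p j ^ k j / (k j).factorial)]
      ring
    have hΓ : Real.Gamma (r + ((∑ j, ((k j:ℝ))) + 1))
        = (r + ∑ j, ((k j:ℝ))) * Real.Gamma (r + ∑ j, ((k j:ℝ))) := by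
      have hpos : (0:ℝ) < r + ∑ j, ((k j:ℝ)) := by have := hsum_nn k; positivity
      rw [show r + ((∑ j, ((k j:ℝ))) + 1) = (r + ∑ j, ((k j:ℝ))) + 1 by ring,
        Real.Gamma_add_one hpos.ne']
    have hfs : ((k i + 1).factorial : ℝ) = ((k i:ℝ)+1) * ((k i).factorial:ℝ) := by
      rw [Nat.factorial_succ]; push_cast; ring
    rw [hpmf k, hpmf (σ k), hσsum, hΓ, hprod, hprod0, hfs]
    have h1 : ((k i).factorial:ℝ) ≠ 0 := by
      exact_mod_cast (k i).factorial_ne_zero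
    have h2 : ((k i:ℝ)+1) ≠ 0 := by positivity
    field_simp
    ring
  -- pointwise identity
  have key : ∀ k : Fin d → ℕ,
      (((∑ j, (k j : ℝ)) + r) * p i * f (Function.update k i (k i + 1)) -
        (k i : ℝ) * f k) * pmf k = g (σ k) - g k := by
    intro k
    have h := pmf_rel k
    have hσi : (σ k) i = k i + 1 := by simp [hσdef]
    have hfeq : Function.update k i (k i + 1) = σ k := rfl
    rw [hfeq]
    simp only [hgdef, hσi]
    push_cast
    linear_combination f (σ k) * h
  -- support of g inside range of σ
  have hsupp : Function.support g ⊆ Set.range σ := by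
    intro k hk
    by_contra hmem
    apply hk
    have hki : k i = 0 := by
      by_contra h
      apply hmem
      refine ⟨Function.update k i (k i - 1), ?_⟩
      funext j
      rcases eq_or_ne j i with rfl | hj
      · simp only [hσdef, Function.update_self]
        omega
      · simp [hσdef, Function.update_of_ne hj]
    simp [hgdef, hki]
  calc ∑' k : Fin d → ℕ,
      (((∑ j, (k j : ℝ)) + r) * p i * f (Function.update k i (k i + 1)) -
        (k i : ℝ) * f k) * pmf k
      = ∑' k, (g (σ k) - g k) := tsum_congr key
    _ = (∑' k, g (σ k)) - ∑' k, g k := Summable.tsum_sub hgs hg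
    _ = 0 := by rw [hσinj.tsum_eq hsupp, sub_self]
end

section
/- Let X follow the Dirichlet negative multinomial distribution DNM(r, α₀, α) on ℕ^d with r ∈ ℕ, r ≥ 1, α₀ > 2, α ∈ (0,∞)^d, with pmf P(X = k) = (B(r + |k|, α₀ + |α|)/B(r, α₀)) ∏ᵢ Γ(kᵢ+αᵢ)/(kᵢ! Γ(αᵢ)), where |k| = ∑ᵢkᵢ and |α| = ∑ᵢαᵢ. For each i and any bounded f : ℕ^d → ℝ, E[(|X| + r)(X⁽ⁱ⁾ + αᵢ) f(X + eᵢ) − X⁽ⁱ⁾(|X| − 1 + r + α₀ + |α|) f(X)] = 0. -/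
open Finset

section Telescoping

variable {ι : Type*} {σ : ι → ι}

theorem Finset.sum_le_sum_comp_of_injective {M : Type*} [AddCommMonoid M] [PartialOrder M]
    [IsOrderedAddMonoid M] (hσ : σ.Injective) {G : ι → M} (hG : 0 ≤ G)
    (hsupp : Function.support G ⊆ Set.range σ) {S : Finset ι} (hS : ∀ k, σ k ∈ S → k ∈ S) :
    ∑ m ∈ S, G m ≤ ∑ k ∈ S, G (σ k) := by
  rw [← sum_preimage σ S hσ.injOn G fun m _ hm => Function.notMem_support.1 fun h => hm (hsupp h)]
  exact sum_le_sum_of_subset_of_nonneg (fun k hk => hS k (mem_preimage.1 hk)) fun _ _ _ => hG _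

theorem tsum_comp_sub_eq_zero {G : Type*} [AddCommGroup G] [TopologicalSpace G]
    [IsTopologicalAddGroup G] [T2Space G] (hσ : σ.Injective) {F : ι → G} (hF : Summable F)
    (hsupp : Function.support F ⊆ Set.range σ) :
    ∑' k, (F (σ k) - F k) = 0 := by
  have hFσ : Summable (F ∘ σ) :=
    (hσ.summable_iff fun m hm => Function.notMem_support.1 fun h => hm (hsupp h)).2 hF
  rw [Summable.tsum_sub (f := fun k => F (σ k)) hFσ hF, hσ.tsum_eq hsupp, sub_self]

theorem Finset.sum_le_sum_abs_sub_of_sum_nonpos [DecidableEq ι] {F G : ι → ℝ} {S T : Finset ι}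
    (hG : ∑ k ∈ S, G k ≤ 0) (hFG : ∀ k ∉ T, F k ≤ G k) :
    ∑ k ∈ S, F k ≤ ∑ k ∈ T, |F k - G k| :=
  calc ∑ k ∈ S, F k = ∑ k ∈ S, G k + ∑ k ∈ S, (F k - G k) := by
        rw [← sum_add_distrib]; simp
    _ ≤ ∑ k ∈ S, if k ∈ T then |F k - G k| else 0 := by
        refine add_le_of_nonpos_of_le hG (sum_le_sum fun k _ => ?_)
        split_ifs with hk
        · exact le_abs_self _
        · exact sub_nonpos.2 (hFG k hk)
    _ = ∑ k ∈ S ∩ T, |F k - G k| := sum_ite_mem S T _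
    _ ≤ ∑ k ∈ T, |F k - G k| :=
        sum_le_sum_of_subset_of_nonneg inter_subset_right fun _ _ _ => abs_nonneg _

theorem summable_of_sum_Iic_le [Preorder ι] [LocallyFiniteOrderBot ι] [IsDirectedOrder ι]
    [Nonempty ι] {f : ι → ℝ} {c : ℝ} (hf : 0 ≤ f) (h : ∀ b, ∑ k ∈ Iic b, f k ≤ c) :
    Summable f := by
  refine summable_of_sum_le (c := c) hf fun U => ?_
  obtain ⟨b, hb⟩ := U.exists_le
  exact (sum_le_sum_of_subset_of_nonneg (fun k hk => mem_Iic.2 (hb k hk))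
    fun k _ _ => hf k).trans (h b)

end Telescoping

theorem betaFn_pos {x y : ℝ} (hx : 0 < x) (hy : 0 < y) : 0 < betaFn x y := by
  unfold betaFn
  have := Real.Gamma_pos_of_pos hx
  have := Real.Gamma_pos_of_pos hy
  have := Real.Gamma_pos_of_pos (add_pos hx hy)
  positivity

theorem betaFn_add_one_left {x y : ℝ} (hx : x ≠ 0) (hxy : x + y ≠ 0) :
    (x + y) * betaFn (x + 1) y = x * betaFn x y := by
  unfold betaFn
  rw [Real.Gamma_add_one hx, add_right_comm, Real.Gamma_add_one hxy]
  field_simp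

theorem Real.Gamma_natCast_add_div_factorial_succ (m : ℕ) {a : ℝ} (h : (m : ℝ) + a ≠ 0) :
    ((m : ℝ) + 1) * (Real.Gamma ((m + 1 : ℕ) + a) / ((m + 1).factorial * Real.Gamma a)) =
      ((m : ℝ) + a) * (Real.Gamma (m + a) / (m.factorial * Real.Gamma a)) := by
  rw [Nat.cast_succ, add_right_comm, Real.Gamma_add_one h, Nat.factorial_succ, Nat.cast_mul,
    Nat.cast_succ]
  field_simp

theorem Finset.prod_add_single_mul {ι R : Type*} [Fintype ι] [DecidableEq ι] [CommMonoid R]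
    (g : ι → ℕ → R) (k : ι → ℕ) (i : ι) :
    (∏ j, g j ((k + Pi.single i 1 : ι → ℕ) j)) * g i (k i) = g i (k i + 1) * ∏ j, g j (k j) := by
  rw [← mul_prod_erase univ _ (mem_univ i), ← mul_prod_erase univ (fun j => g j (k j)) (mem_univ i),
    prod_congr rfl fun j hj => by
      rw [Pi.add_apply, Pi.single_eq_of_ne (ne_of_mem_erase hj), add_zero]]
  simp only [Pi.add_apply, Pi.single_eq_same]
  ac_rfl

-- `x² (x - 1 + r + α₀ + s) - (x + 1)(x + r)(x + s) = (α₀ - 2) x² - (r + s + r s) x - r s`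
theorem exists_nat_forall_le_cubic_weight {r α₀ s : ℝ} (hr : 0 ≤ r) (hs : 0 ≤ s) (hα₀ : 2 < α₀) :
    ∃ N : ℕ, ∀ x : ℝ, N ≤ x → (α₀ - 2) * (x * (x - 1 + r + α₀ + s)) ≤
      2 * (x * (x * (x - 1 + r + α₀ + s)) - (x + 1) * (x + r) * (x + s)) := by
  obtain ⟨N, hN⟩ := exists_nat_ge (r + α₀ + s + 2 * (r + s + 2 * r * s) / (α₀ - 2))
  refine ⟨N, fun x hx => ?_⟩
  have hlin : (α₀ - 2) * (r + α₀ + s) + 2 * (r + s + 2 * r * s) ≤ (α₀ - 2) * x := by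
    have := (div_le_iff₀ (sub_pos.2 hα₀)).1
      (show 2 * (r + s + 2 * r * s) / (α₀ - 2) ≤ x - (r + α₀ + s) by linarith)
    linarith
  have hx1 : 1 ≤ x := by nlinarith
  nlinarith [mul_le_mul_of_nonneg_right hlin (by linarith : (0 : ℝ) ≤ x),
    mul_nonneg (mul_nonneg hr hs) (sub_nonneg.2 hx1)]

section DirichletNegMultinomial

variable {d : ℕ} (r α₀ : ℝ) (α : Fin d → ℝ)

noncomputable def dnmPmf (k : Fin d → ℕ) : ℝ :=
  betaFn (r + ∑ i, (k i : ℝ)) (α₀ + ∑ i, α i) / betaFn r α₀ *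
    ∏ i, Real.Gamma ((k i : ℝ) + α i) / (Nat.factorial (k i) * Real.Gamma (α i))

def dnmTau (i : Fin d) (k : Fin d → ℕ) : ℝ :=
  k i * (∑ j, (k j : ℝ) - 1 + r + α₀ + ∑ j, α j)

variable {r α₀ α}

theorem sum_natCast_add_single (k : Fin d → ℕ) (i : Fin d) :
    ∑ j, ((k + Pi.single i 1 : Fin d → ℕ) j : ℝ) = ∑ j, (k j : ℝ) + 1 := by
  simp [sum_add_distrib, Pi.single_apply]

theorem dnmPmf_nonneg (hr : 0 < r) (hα₀ : 0 < α₀) (hα : ∀ i, 0 < α i) (k : Fin d → ℕ) :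
    0 ≤ dnmPmf r α₀ α k := by
  have hs : 0 ≤ ∑ i, α i := sum_nonneg fun i _ => (hα i).le
  have hk : 0 ≤ ∑ i, (k i : ℝ) := sum_nonneg fun i _ => Nat.cast_nonneg _
  refine mul_nonneg (div_nonneg (betaFn_pos (by linarith) (by linarith)).le
    (betaFn_pos hr hα₀).le) (prod_nonneg fun i _ => ?_)
  have := Real.Gamma_pos_of_pos (hα i)
  have := Real.Gamma_pos_of_pos (add_pos_of_nonneg_of_pos (Nat.cast_nonneg (k i)) (hα i))
  positivity

theorem dnmPmf_add_single (hr : 0 < r) (hα₀ : 0 < α₀) (hα : ∀ i, 0 < α i) (k : Fin d → ℕ)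
    (i : Fin d) :
    ((k i : ℝ) + 1) * (∑ j, (k j : ℝ) + r + α₀ + ∑ j, α j) * dnmPmf r α₀ α (k + Pi.single i 1) =
      (∑ j, (k j : ℝ) + r) * ((k i : ℝ) + α i) * dnmPmf r α₀ α k := by
  set n := ∑ j, (k j : ℝ)
  set a := α₀ + ∑ j, α j
  set coord := fun (j : Fin d) (m : ℕ) =>
    Real.Gamma ((m : ℝ) + α j) / (m.factorial * Real.Gamma (α j))
  have hn : 0 ≤ n := sum_nonneg fun j _ => Nat.cast_nonneg _
  have ha : 0 < a := add_pos_of_pos_of_nonneg hα₀ (sum_nonneg fun j _ => (hα j).le)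
  have hkα : 0 < (k i : ℝ) + α i := add_pos_of_nonneg_of_pos (Nat.cast_nonneg _) (hα i)
  have hcoord_pos : 0 < coord i (k i) := by
    have := Real.Gamma_pos_of_pos hkα
    have := Real.Gamma_pos_of_pos (hα i)
    positivity
  have hbeta : (r + n + a) * betaFn (r + n + 1) a = (r + n) * betaFn (r + n) a :=
    betaFn_add_one_left (by linarith) (by linarith)
  have hcoord : ((k i : ℝ) + 1) * coord i (k i + 1) = ((k i : ℝ) + α i) * coord i (k i) :=
    Real.Gamma_natCast_add_div_factorial_succ (k i) hkα.ne'
  have hprod := prod_add_single_mul coord k i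
  unfold dnmPmf
  rw [sum_natCast_add_single, ← add_assoc]
  refine mul_right_cancel₀ hcoord_pos.ne' ?_
  linear_combination ((k i + 1) * (n + r + a) * betaFn (r + n + 1) a / betaFn r α₀) * hprod +
    ((r + n + a) * betaFn (r + n + 1) a * (∏ j, coord j (k j)) / betaFn r α₀) * hcoord +
    ((k i + α i) * coord i (k i) * (∏ j, coord j (k j)) / betaFn r α₀) * hbeta

theorem dnmTau_add_single_mul_dnmPmf (hr : 0 < r) (hα₀ : 0 < α₀) (hα : ∀ i, 0 < α i)
    (k : Fin d → ℕ) (i : Fin d) :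
    dnmTau r α₀ α i (k + Pi.single i 1) * dnmPmf r α₀ α (k + Pi.single i 1) =
      (∑ j, (k j : ℝ) + r) * ((k i : ℝ) + α i) * dnmPmf r α₀ α k := by
  rw [← dnmPmf_add_single hr hα₀ hα, dnmTau, sum_natCast_add_single]
  simp only [Pi.add_apply, Pi.single_eq_same, Nat.cast_add, Nat.cast_one]
  ring

theorem dnmTau_nonneg (hr : 0 ≤ r) (hα₀ : 0 ≤ α₀) (hα : ∀ i, 0 ≤ α i) (i : Fin d)
    (k : Fin d → ℕ) : 0 ≤ dnmTau r α₀ α i k := by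
  have hs : 0 ≤ ∑ j, α j := sum_nonneg fun j _ => hα j
  have hki : (k i : ℝ) ≤ ∑ j, (k j : ℝ) :=
    single_le_sum (f := fun j => (k j : ℝ)) (fun j _ => Nat.cast_nonneg _) (mem_univ i)
  rcases Nat.eq_zero_or_pos (k i) with h0 | h1
  · simp [dnmTau, h0]
  · have : (1 : ℝ) ≤ k i := by exact_mod_cast h1
    unfold dnmTau
    nlinarith

theorem dnmTau_eq_zero {i : Fin d} {k : Fin d → ℕ} (h : k i = 0) : dnmTau r α₀ α i k = 0 := by
  simp [dnmTau, h]

theorem sum_dnmTau (k : Fin d → ℕ) :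
    ∑ i, dnmTau r α₀ α i k = (∑ j, (k j : ℝ)) * (∑ j, (k j : ℝ) - 1 + r + α₀ + ∑ j, α j) := by
  simp only [dnmTau, ← sum_mul]

theorem support_subset_range_add_single {f : (Fin d → ℕ) → ℝ} {i : Fin d}
    (hf : ∀ k, k i = 0 → f k = 0) :
    Function.support f ⊆ Set.range fun k : Fin d → ℕ => k + Pi.single i 1 := by
  intro m hm
  have : Pi.single i 1 ≤ m := by
    intro j
    rcases eq_or_ne j i with rfl | hj
    · simpa [Nat.one_le_iff_ne_zero] using fun h => hm (hf m h)
    · simp [Pi.single_eq_of_ne hj]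
  exact ⟨m - Pi.single i 1, tsub_add_cancel_of_le this⟩

theorem sum_Iic_mul_sum_dnmTau_mul_dnmPmf_le (hr : 0 < r) (hα₀ : 0 < α₀) (hα : ∀ i, 0 < α i)
    (b : Fin d → ℕ) :
    ∑ k ∈ Iic b, (∑ j, (k j : ℝ)) * (∑ i, dnmTau r α₀ α i k) * dnmPmf r α₀ α k ≤
      ∑ k ∈ Iic b, (∑ j, (k j : ℝ) + 1) * (∑ j, (k j : ℝ) + r) * (∑ j, (k j : ℝ) + ∑ j, α j) *
        dnmPmf r α₀ α k := by
  calc _ = ∑ i, ∑ k ∈ Iic b, (∑ j, (k j : ℝ)) * dnmTau r α₀ α i k * dnmPmf r α₀ α k := by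
        rw [sum_comm]; simp only [mul_sum, sum_mul]
    _ ≤ ∑ i, ∑ k ∈ Iic b, (∑ j, ((k + Pi.single i 1 : Fin d → ℕ) j : ℝ)) *
          dnmTau r α₀ α i (k + Pi.single i 1) * dnmPmf r α₀ α (k + Pi.single i 1) :=
        sum_le_sum fun i _ => sum_le_sum_comp_of_injective (add_left_injective _)
          (fun k => mul_nonneg (mul_nonneg (sum_nonneg fun j _ => Nat.cast_nonneg _)
            (dnmTau_nonneg hr.le hα₀.le (fun j => (hα j).le) i k)) (dnmPmf_nonneg hr hα₀ hα k))
          (support_subset_range_add_single fun k h => by simp [dnmTau_eq_zero h])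
          fun k hk => mem_Iic.2 (le_self_add.trans (mem_Iic.1 hk))
    _ = ∑ i, ∑ k ∈ Iic b, (∑ j, (k j : ℝ) + 1) * (∑ j, (k j : ℝ) + r) * ((k i : ℝ) + α i) *
          dnmPmf r α₀ α k := by
        simp only [sum_natCast_add_single, mul_assoc, dnmTau_add_single_mul_dnmPmf hr hα₀ hα]
    _ = _ := by
        rw [sum_comm]
        refine sum_congr rfl fun k _ => ?_
        rw [← sum_mul, ← mul_sum, sum_add_distrib]

theorem summable_sum_dnmTau_mul_dnmPmf (hr : 0 < r) (hα₀ : 2 < α₀) (hα : ∀ i, 0 < α i) :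
    Summable fun k => (∑ i, dnmTau r α₀ α i k) * dnmPmf r α₀ α k := by
  set s := ∑ j, α j
  have hs : 0 ≤ s := sum_nonneg fun j _ => (hα j).le
  have hα₀' : 0 < α₀ := by linarith
  have hp := dnmPmf_nonneg hr hα₀' hα
  have hτ : ∀ k, 0 ≤ ∑ i, dnmTau r α₀ α i k :=
    fun k => sum_nonneg fun i _ => dnmTau_nonneg hr.le hα₀'.le (fun j => (hα j).le) i k
  obtain ⟨N, hN⟩ := exists_nat_forall_le_cubic_weight hr.le hs hα₀
  rw [← summable_mul_left_iff (sub_pos.2 hα₀).ne']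
  refine summable_of_sum_Iic_le
    (fun k => mul_nonneg (sub_nonneg.2 hα₀.le) (mul_nonneg (hτ k) (hp k))) fun b =>
    sum_le_sum_abs_sub_of_sum_nonpos (T := Iic fun _ => N)
      (G := fun k => 2 * (((∑ j, (k j : ℝ)) * (∑ i, dnmTau r α₀ α i k) -
        (∑ j, (k j : ℝ) + 1) * (∑ j, (k j : ℝ) + r) * (∑ j, (k j : ℝ) + s)) * dnmPmf r α₀ α k))
      ?_ ?_
  · rw [← mul_sum]
    simp only [sub_mul, sum_sub_distrib]
    linarith [sum_Iic_mul_sum_dnmTau_mul_dnmPmf_le hr hα₀' hα b]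
  · intro k hk
    obtain ⟨j, hj⟩ : ∃ j, N < k j := by simpa [Pi.le_def] using hk
    have hNk : (N : ℝ) ≤ ∑ j, (k j : ℝ) :=
      (Nat.cast_le.2 hj.le).trans (single_le_sum (f := fun j => (k j : ℝ))
        (fun j _ => Nat.cast_nonneg _) (mem_univ j))
    have := mul_le_mul_of_nonneg_right (hN _ hNk) (hp k)
    simp only [sum_dnmTau]
    linarith

theorem summable_dnmTau_mul_dnmPmf (hr : 0 < r) (hα₀ : 2 < α₀) (hα : ∀ i, 0 < α i) (i : Fin d) :
    Summable fun k => dnmTau r α₀ α i k * dnmPmf r α₀ α k := by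
  have hα₀' : 0 < α₀ := by linarith
  have hτ := dnmTau_nonneg hr.le hα₀'.le fun j => (hα j).le
  have hp := dnmPmf_nonneg hr hα₀' hα
  exact (summable_sum_dnmTau_mul_dnmPmf hr hα₀ hα).of_nonneg_of_le
    (fun k => mul_nonneg (hτ i k) (hp k)) fun k => mul_le_mul_of_nonneg_right
      (single_le_sum (fun j _ => hτ j k) (mem_univ i)) (hp k)

end DirichletNegMultinomial

theorem Function.update_add_eq_add_single {ι M : Type*} [DecidableEq ι] [AddZeroClass M]
    (k : ι → M) (i : ι) (a : M) : Function.update k i (k i + a) = k + Pi.single i a := by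
  ext j
  rcases eq_or_ne j i with rfl | hj
  · simp
  · simp [hj]

theorem dirichlet_negative_multinomial_stein_identity_general
    (d : ℕ) (r : ℕ) (hr : 1 ≤ r) (α₀ : ℝ) (hα₀ : 2 < α₀)
    (α : Fin d → ℝ) (hα : ∀ i, 0 < α i)
    (f : (Fin d → ℕ) → ℝ) (hf : ∃ C : ℝ, ∀ k, |f k| ≤ C)
    (pmf : (Fin d → ℕ) → ℝ)
    (hpmf : ∀ k : Fin d → ℕ, pmf k =
      betaFn ((r : ℝ) + ∑ i, (k i : ℝ)) (α₀ + ∑ i, α i) / betaFn (r : ℝ) α₀ *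
        ∏ i, Real.Gamma ((k i : ℝ) + α i) / (Nat.factorial (k i) * Real.Gamma (α i))) :
    ∀ i : Fin d,
      ∑' k : Fin d → ℕ,
        (((∑ j, (k j : ℝ)) + r) * ((k i : ℝ) + α i) * f (Function.update k i (k i + 1)) -
          (k i : ℝ) * ((∑ j, (k j : ℝ)) - 1 + r + α₀ + ∑ j, α j) * f k) * pmf k = 0 := by
  intro i
  obtain ⟨C, hC⟩ := hf
  obtain rfl : pmf = dnmPmf r α₀ α := funext hpmf
  have hr' : (0 : ℝ) < r := by exact_mod_cast hr
  have hα₀' : 0 < α₀ := by linarith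
  set G := fun k => f k * (dnmTau r α₀ α i k * dnmPmf r α₀ α k)
  have hτp : ∀ k, 0 ≤ dnmTau r α₀ α i k * dnmPmf r α₀ α k := fun k =>
    mul_nonneg (dnmTau_nonneg hr'.le hα₀'.le (fun j => (hα j).le) i k) (dnmPmf_nonneg hr' hα₀' hα k)
  have hG : Summable G := ((summable_dnmTau_mul_dnmPmf hr' hα₀ hα i).mul_left C).of_norm_bounded
    fun k => by
      rw [norm_mul, Real.norm_eq_abs, Real.norm_eq_abs, abs_of_nonneg (hτp k)]
      exact mul_le_mul_of_nonneg_right (hC k) (hτp k)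
  have hterm : ∀ k, (((∑ j, (k j : ℝ)) + r) * ((k i : ℝ) + α i) *
      f (Function.update k i (k i + 1)) - (k i : ℝ) * ((∑ j, (k j : ℝ)) - 1 + r + α₀ + ∑ j, α j) *
      f k) * dnmPmf r α₀ α k = G (k + Pi.single i 1) - G k := fun k => by
    simp only [G, Function.update_add_eq_add_single]
    rw [dnmTau_add_single_mul_dnmPmf hr' hα₀' hα, dnmTau]
    ring
  rw [tsum_congr hterm]
  exact tsum_comp_sub_eq_zero (add_left_injective _) hG
    (support_subset_range_add_single fun k h => by simp [G, dnmTau_eq_zero h])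

/-- Stein identity for the Dirichlet negative multinomial distribution `DNM(r,α₀,α)`
on `ℕ^d`: for each coordinate `i` and any bounded `f`,
`E[(|X|+r)(X⁽ⁱ⁾+αᵢ) f(X+eᵢ) − X⁽ⁱ⁾(|X|−1+r+α₀+|α|) f(X)] = 0`. -/
theorem dirichlet_negative_multinomial_stein_identity
    (d : ℕ) (hd : 0 < d) (r : ℕ) (hr : 1 ≤ r) (α₀ : ℝ) (hα₀ : 2 < α₀)
    (α : Fin d → ℝ) (hα : ∀ i, 0 < α i)
    (f : (Fin d → ℕ) → ℝ) (hf : ∃ C : ℝ, ∀ k, |f k| ≤ C)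
    (pmf : (Fin d → ℕ) → ℝ)
    (hpmf : ∀ k : Fin d → ℕ, pmf k =
      betaFn ((r : ℝ) + ∑ i, (k i : ℝ)) (α₀ + ∑ i, α i) / betaFn (r : ℝ) α₀ *
        ∏ i, Real.Gamma ((k i : ℝ) + α i) / (Nat.factorial (k i) * Real.Gamma (α i))) :
    ∀ i : Fin d,
      ∑' k : Fin d → ℕ,
        (((∑ j, (k j : ℝ)) + r) * ((k i : ℝ) + α i) * f (Function.update k i (k i + 1)) -
          (k i : ℝ) * ((∑ j, (k j : ℝ)) - 1 + r + α₀ + ∑ j, α j) * f k) * pmf k = 0 :=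
  dirichlet_negative_multinomial_stein_identity_general d r hr α₀ hα₀ α hα f hf pmf hpmf
end
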